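/- Let p = [b_1^{a_1} ⋯ b_r^{a_r}] (b_1 ≥ ⋯ ≥ b_r) be an orthogonal partition of 2n in which every b_i is even (so every a_i is even). Then n* = 0 and, with P := [p_1 p_1], one has P = p^t, the partition p^t is a special orthogonal partition of 2n, and P^{SO_{2n}} = (p^t)_{SO_{2n}} = p^t. -/

import Mathlib

namespace JiangWF

/-- `sCount p i` : the number of parts of `p` that are `≥ i`. -/
def sCount (p : Multiset ℕ) (i : ℕ) : ℕ := (p.filter (fun a => i ≤ a)).card

/-- `rCount p i` : the number of parts of `p` equal to `i`. -/
def rCount (p : Multiset ℕ) (i : ℕ) : ℕ := p.count i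

/-- The largest part of `p` (`0` for the empty partition). -/
def maxPart (p : Multiset ℕ) : ℕ := p.sup

/-- The smallest part of `p` (`0` for the empty partition). -/
noncomputable def minPart (p : Multiset ℕ) : ℕ := sInf {a : ℕ | a ∈ p}

/-- The transpose partition: its `i`-th part is `sCount p i`, for `1 ≤ i ≤ maxPart p`. -/
def transpose (p : Multiset ℕ) : Multiset ℕ :=
  (Multiset.range (maxPart p)).map fun i => sCount p (i + 1)

/-- The sum of the `m` largest parts of `p`. -/
def topSum (p : Multiset ℕ) (m : ℕ) : ℕ :=
  ∑ i ∈ Finset.Icc 1 p.sum, min m (sCount p i)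

/-- Dominance order: `domLE p q` means `p ≤ q`. -/
def domLE (p q : Multiset ℕ) : Prop := ∀ m, topSum p m ≤ topSum q m

/-- `p` is a partition of `N`: all parts positive, summing to `N`. -/
def IsPartitionOf (p : Multiset ℕ) (N : ℕ) : Prop := (∀ a ∈ p, 0 < a) ∧ p.sum = N

/-- Symplectic partition: every odd part occurs with even multiplicity. -/
def IsSymplectic (p : Multiset ℕ) : Prop := ∀ a, a % 2 = 1 → Even (p.count a)

/-- Orthogonal partition: every even part occurs with even multiplicity. -/
def IsOrthogonal (p : Multiset ℕ) : Prop := ∀ a, a % 2 = 0 → Even (p.count a)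

/-- `p^-`: decrease the smallest part by one (deleting it if it becomes `0`). -/
noncomputable def pMinus (p : Multiset ℕ) : Multiset ℕ :=
  if minPart p ≤ 1 then p.erase (minPart p)
  else (minPart p - 1) ::ₘ p.erase (minPart p)

/-- `p^+`: increase the largest part by one. -/
def pPlus (p : Multiset ℕ) : Multiset ℕ := (maxPart p + 1) ::ₘ p.erase (maxPart p)

/-- `p^{+-}`: increase the largest part by one and decrease the smallest by one. -/
noncomputable def pPM (p : Multiset ℕ) : Multiset ℕ := pMinus (pPlus p)

/-- `p₁ = [⌊b_1/2⌋^{a_1} ⋯ ⌊b_r/2⌋^{a_r}]^t` (discarding zero entries before transposing). -/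
def pOne (p : Multiset ℕ) : Multiset ℕ :=
  transpose ((p.map fun b => b / 2).filter fun x => 0 < x)

/-- `Σ_{i : b_i odd} a_i`: the number of odd parts of `p`. -/
def oddMult (p : Multiset ℕ) : ℕ := (p.filter fun a => a % 2 = 1).card

/-- `n* = ⌊(Σ_{i : b_i odd} a_i)/2⌋`. -/
def nStar (p : Multiset ℕ) : ℕ := oddMult p / 2

/-- Append an extra part `m` to `q`, omitted if `m = 0`. -/
def addPart (m : ℕ) (q : Multiset ℕ) : Multiset ℕ := if m = 0 then q else m ::ₘ q

/-- `c` is the `Sp`-collapse of `p`: the maximal symplectic partition `≤ p` in dominance. -/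
def IsSpCollapse (p c : Multiset ℕ) : Prop :=
  IsPartitionOf c p.sum ∧ IsSymplectic c ∧ domLE c p ∧
    ∀ c', IsPartitionOf c' p.sum → IsSymplectic c' → domLE c' p → domLE c' c

/-- `c` is the `SO`-collapse of `p`: the maximal orthogonal partition `≤ p` in dominance. -/
def IsSOCollapse (p c : Multiset ℕ) : Prop :=
  IsPartitionOf c p.sum ∧ IsOrthogonal c ∧ domLE c p ∧
    ∀ c', IsPartitionOf c' p.sum → IsOrthogonal c' → domLE c' p → domLE c' c

/-- `e` is the `Sp`-expansion of `p`: the minimal special symplectic partition `≥ p`. -/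
def IsSpExpansion (p e : Multiset ℕ) : Prop :=
  IsPartitionOf e p.sum ∧ IsSymplectic e ∧ IsSymplectic (transpose e) ∧ domLE p e ∧
    ∀ e', IsPartitionOf e' p.sum → IsSymplectic e' → IsSymplectic (transpose e') →
      domLE p e' → domLE e e'

/-- `e` is the `SO_{2n+1}`-expansion of `p`: the minimal special orthogonal partition `≥ p`
(odd case: special means the transpose is orthogonal). -/
def IsSOOddExpansion (p e : Multiset ℕ) : Prop :=
  IsPartitionOf e p.sum ∧ IsOrthogonal e ∧ IsOrthogonal (transpose e) ∧ domLE p e ∧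
    ∀ e', IsPartitionOf e' p.sum → IsOrthogonal e' → IsOrthogonal (transpose e') →
      domLE p e' → domLE e e'

/-- `e` is the `SO_{2n}`-expansion of `p`: the minimal special orthogonal partition `≥ p`
(even case: special means the transpose is symplectic). -/
def IsSOEvenExpansion (p e : Multiset ℕ) : Prop :=
  IsPartitionOf e p.sum ∧ IsOrthogonal e ∧ IsSymplectic (transpose e) ∧ domLE p e ∧
    ∀ e', IsPartitionOf e' p.sum → IsOrthogonal e' → IsSymplectic (transpose e') →
      domLE p e' → domLE e e'

/-- `dim_C(q)` for a symplectic partition `q` of `2k`: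
`2k² + k − (1/2)Σ s_i(q)² − (1/2)Σ_{i odd} r_i(q)` (note `2k² + k = (|q|² + |q|)/2`). -/
def dimC (p : Multiset ℕ) : ℚ :=
  ((p.sum : ℚ) ^ 2 + (p.sum : ℚ)) / 2
    - (∑ i ∈ Finset.Icc 1 p.sum, (sCount p i : ℚ) ^ 2) / 2
    - (∑ i ∈ Finset.Icc 1 p.sum, if i % 2 = 1 then (rCount p i : ℚ) else 0) / 2

/-- `dim_B(q)` for an orthogonal partition `q` of `2k+1`:
`2k² + k − (1/2)Σ s_i(q)² + (1/2)Σ_{i odd} r_i(q)` (note `2k² + k = (|q|² − |q|)/2`). -/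
def dimB (p : Multiset ℕ) : ℚ :=
  ((p.sum : ℚ) ^ 2 - (p.sum : ℚ)) / 2
    - (∑ i ∈ Finset.Icc 1 p.sum, (sCount p i : ℚ) ^ 2) / 2
    + (∑ i ∈ Finset.Icc 1 p.sum, if i % 2 = 1 then (rCount p i : ℚ) else 0) / 2

/-- `dim_D(q)` for an orthogonal partition `q` of `2k`:
`2k² − k − (1/2)Σ s_i(q)² + (1/2)Σ_{i odd} r_i(q)` (note `2k² − k = (|q|² − |q|)/2`). -/
def dimD (p : Multiset ℕ) : ℚ :=
  ((p.sum : ℚ) ^ 2 - (p.sum : ℚ)) / 2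
    - (∑ i ∈ Finset.Icc 1 p.sum, (sCount p i : ℚ) ^ 2) / 2
    + (∑ i ∈ Finset.Icc 1 p.sum, if i % 2 = 1 then (rCount p i : ℚ) else 0) / 2

/-!
All parts of `p` being even, `p` is obtained from `q := [⌊b_1/2⌋^{a_1} ⋯ ⌊b_r/2⌋^{a_r}]` by
doubling every part, and transposition turns doubling of parts into doubling of multiplicities:
`p^t = [q^t q^t] = [p₁ p₁]`. A partition in which every multiplicity is even is orthogonal, and
its transpose has only even parts, hence is symplectic; so `p^t` is special orthogonal, and by
antisymmetry of the dominance order it is its own `SO_{2n}`-collapse and `SO_{2n}`-expansion.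
-/

section Partitions

open Finset

lemma sCount_cons (a : ℕ) (s : Multiset ℕ) (i : ℕ) :
    sCount (a ::ₘ s) i = sCount s i + if i ≤ a then 1 else 0 := by
  simp only [sCount, Multiset.filter_cons]
  split <;> simp [add_comm]

lemma sCount_add (s t : Multiset ℕ) (i : ℕ) : sCount (s + t) i = sCount s i + sCount t i := by
  simp only [sCount, Multiset.filter_add, Multiset.card_add]

lemma antitone_sCount (s : Multiset ℕ) : Antitone (sCount s) := fun _ _ hij =>
  Multiset.card_le_card (Multiset.monotone_filter_right s fun _ hj => hij.trans hj)

lemma sCount_le_sum (s : Multiset ℕ) (hs : ∀ a ∈ s, 0 < a) (i : ℕ) : sCount s i ≤ s.sum :=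
  calc sCount s i ≤ Multiset.card s := Multiset.card_le_card (Multiset.filter_le _ s)
    _ ≤ s.sum := by simpa using Multiset.card_nsmul_le_sum hs

lemma sCount_eq_zero_of_sum_lt (s : Multiset ℕ) {i : ℕ} (hi : s.sum < i) : sCount s i = 0 := by
  rw [sCount, Multiset.card_eq_zero, Multiset.filter_eq_nil]
  exact fun a ha => by have := Multiset.le_sum_of_mem ha; omega

lemma sCount_eq_count_add_sCount_succ (s : Multiset ℕ) (a : ℕ) :
    sCount s a = s.count a + sCount s (a + 1) := by
  induction s using Multiset.induction with
  | empty => rfl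
  | cons b s ih =>
    rw [sCount_cons, sCount_cons, Multiset.count_cons, ih]
    split_ifs <;> omega

lemma eq_of_sCount_eq {s t : Multiset ℕ} (hs : ∀ a ∈ s, 0 < a) (ht : ∀ a ∈ t, 0 < a)
    (h : ∀ i, 1 ≤ i → sCount s i = sCount t i) : s = t := by
  ext a
  rcases Nat.eq_zero_or_pos a with rfl | ha
  · rw [Multiset.count_eq_zero_of_notMem fun h => (hs 0 h).false,
      Multiset.count_eq_zero_of_notMem fun h => (ht 0 h).false]
  · have hs_a := sCount_eq_count_add_sCount_succ s a
    have ht_a := sCount_eq_count_add_sCount_succ t a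
    have := h a ha
    have := h (a + 1) (by omega)
    omega

lemma le_maxPart {s : Multiset ℕ} {a : ℕ} (h : a ∈ s) : a ≤ maxPart s := Multiset.le_sup h

lemma maxPart_mem {s : Multiset ℕ} (h : s ≠ 0) : maxPart s ∈ s := by
  induction s using Multiset.induction with
  | empty => exact absurd rfl h
  | cons b s ih =>
    rw [maxPart, Multiset.sup_cons]
    rcases eq_or_ne s 0 with rfl | hs
    · simp
    rcases le_total b s.sup with hle | hle
    · rw [sup_eq_right.mpr hle]
      exact Multiset.mem_cons_of_mem (ih hs)
    · rw [sup_eq_left.mpr hle]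
      exact Multiset.mem_cons_self b s

lemma maxPart_add_self (s : Multiset ℕ) : maxPart (s + s) = maxPart s := by
  rw [maxPart, Multiset.sup_add, sup_idem]
  rfl

lemma maxPart_map_two_mul (s : Multiset ℕ) : maxPart (s.map (2 * ·)) = 2 * maxPart s := by
  induction s using Multiset.induction with
  | empty => rfl
  | cons b s ih =>
    simp only [maxPart, Multiset.map_cons, Multiset.sup_cons] at ih ⊢
    rw [ih, Nat.mul_max_mul_left]

lemma sum_range_sCount_succ (s : Multiset ℕ) {M : ℕ} (h : ∀ a ∈ s, a ≤ M) :
    ∑ i ∈ range M, sCount s (i + 1) = s.sum := by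
  induction s using Multiset.induction with
  | empty => simp [sCount]
  | cons b s ih =>
    simp only [sCount_cons, Multiset.sum_cons, sum_add_distrib, ← sum_filter]
    rw [ih fun a ha => h a (Multiset.mem_cons_of_mem ha), add_comm]
    have hb : b ≤ M := h b (Multiset.mem_cons_self b s)
    have hfilter : (range M).filter (fun i => i + 1 ≤ b) = range b := by
      ext i
      simp only [mem_filter, mem_range]
      omega
    rw [hfilter, sum_const, card_range, smul_eq_mul, mul_one]

lemma sum_transpose (p : Multiset ℕ) : (transpose p).sum = p.sum :=
  sum_range_sCount_succ p fun _ => le_maxPart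

lemma pos_of_mem_transpose {p : Multiset ℕ} {x : ℕ} (hx : x ∈ transpose p) : 0 < x := by
  obtain ⟨i, hi, rfl⟩ := Multiset.mem_map.mp hx
  rw [Multiset.mem_range] at hi
  have hne : p ≠ 0 := by rintro rfl; simp [maxPart] at hi
  exact Multiset.card_pos_iff_exists_mem.mpr
    ⟨maxPart p, Multiset.mem_filter.mpr ⟨maxPart_mem hne, by omega⟩⟩

lemma isPartitionOf_transpose {p : Multiset ℕ} {N : ℕ} (hp : IsPartitionOf p N) :
    IsPartitionOf (transpose p) N :=
  ⟨fun _ => pos_of_mem_transpose, (sum_transpose p).trans hp.2⟩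

lemma sCount_map_two_mul (s : Multiset ℕ) (i : ℕ) :
    sCount (s.map (2 * ·)) i = sCount s ((i + 1) / 2) := by
  rw [sCount, sCount, Multiset.filter_map, Multiset.card_map]
  congr 1
  exact Multiset.filter_congr fun a _ => by simp only [Function.comp_apply]; omega

lemma map_range_two_mul_eq (m : ℕ) (f g : ℕ → ℕ)
    (h : ∀ k < m, f (2 * k) = g k ∧ f (2 * k + 1) = g k) :
    (Multiset.range (2 * m)).map f = (Multiset.range m).map g + (Multiset.range m).map g := by
  induction m with
  | zero => simp
  | succ m ih =>
    obtain ⟨h_even, h_odd⟩ := h m (by omega)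
    rw [show 2 * (m + 1) = 2 * m + 1 + 1 by ring, Multiset.range_succ, Multiset.range_succ,
      Multiset.range_succ, Multiset.map_cons, Multiset.map_cons, Multiset.map_cons,
      ih fun k hk => h k (by omega), h_even, h_odd]
    simp only [← Multiset.singleton_add]
    abel

lemma transpose_map_two_mul (s : Multiset ℕ) :
    transpose (s.map (2 * ·)) = transpose s + transpose s := by
  rw [transpose, transpose, maxPart_map_two_mul]
  refine map_range_two_mul_eq _ _ _ fun k _ => ⟨?_, ?_⟩ <;>
    rw [sCount_map_two_mul] <;> congr 1 <;> omega

lemma transpose_add_self (s : Multiset ℕ) : transpose (s + s) = (transpose s).map (2 * ·) := by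
  rw [transpose, transpose, maxPart_add_self, Multiset.map_map]
  refine Multiset.map_congr rfl fun i _ => ?_
  simp only [Function.comp_apply, sCount_add, two_mul]

lemma isOrthogonal_add_self (s : Multiset ℕ) : IsOrthogonal (s + s) :=
  fun a _ => by rw [Multiset.count_add]; exact ⟨_, rfl⟩

lemma isSymplectic_map_two_mul (s : Multiset ℕ) : IsSymplectic (s.map (2 * ·)) := by
  intro a ha
  rw [Multiset.count_eq_zero_of_notMem]
  · exact Even.zero
  · intro hmem
    obtain ⟨b, _, rfl⟩ := Multiset.mem_map.mp hmem
    omega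

lemma map_two_mul_map_div_two {p : Multiset ℕ} (heven : ∀ a ∈ p, a % 2 = 0) :
    (p.map (· / 2)).map (2 * ·) = p := by
  rw [Multiset.map_map]
  conv_rhs => rw [← Multiset.map_id p]
  refine Multiset.map_congr rfl fun a ha => ?_
  have := heven a ha
  simp only [Function.comp_apply, id]
  omega

lemma pOne_eq_transpose_map_div_two {p : Multiset ℕ} (hpos : ∀ a ∈ p, 0 < a)
    (heven : ∀ a ∈ p, a % 2 = 0) : pOne p = transpose (p.map (· / 2)) := by
  rw [pOne]
  congr 1
  refine Multiset.filter_eq_self.mpr fun x hx => ?_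
  obtain ⟨b, hb, rfl⟩ := Multiset.mem_map.mp hx
  have := hpos b hb
  have := heven b hb
  omega

lemma pOne_add_self {p : Multiset ℕ} (hpos : ∀ a ∈ p, 0 < a) (heven : ∀ a ∈ p, a % 2 = 0) :
    pOne p + pOne p = transpose p := by
  rw [pOne_eq_transpose_map_div_two hpos heven, ← transpose_map_two_mul,
    map_two_mul_map_div_two heven]

lemma nStar_eq_zero_of_forall_even {p : Multiset ℕ} (heven : ∀ a ∈ p, a % 2 = 0) :
    nStar p = 0 := by
  have hodd : p.filter (fun a => a % 2 = 1) = 0 :=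
    Multiset.filter_eq_nil.mpr fun a ha _ => by have := heven a ha; omega
  rw [nStar, oddMult, hodd]
  rfl

lemma topSum_succ (p : Multiset ℕ) (m : ℕ) :
    topSum p (m + 1) = topSum p m + #{i ∈ Icc 1 p.sum | m + 1 ≤ sCount p i} := by
  have hmin : ∀ i, min (m + 1) (sCount p i)
      = min m (sCount p i) + if m + 1 ≤ sCount p i then 1 else 0 := fun i => by
    split_ifs <;> omega
  simp only [topSum, hmin, sum_add_distrib, ← sum_filter, sum_const, smul_eq_mul, mul_one]

/-- For antitone `f`, the map `m ↦ #{j ∈ [1, N] | m ≤ f j}` is the transpose of `f` on `[1, N]`. -/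
lemma le_card_filter_iff_of_antitone {f : ℕ → ℕ} (hf : Antitone f) {N i m : ℕ}
    (hi : 1 ≤ i) (hiN : i ≤ N) : i ≤ #{j ∈ Icc 1 N | m ≤ f j} ↔ m ≤ f i := by
  constructor
  · intro h
    by_contra! hlt
    have hsub : {j ∈ Icc 1 N | m ≤ f j} ⊆ Icc 1 (i - 1) := fun j hj => by
      rw [mem_filter, mem_Icc] at hj
      have : ¬ i ≤ j := fun hij => by have := hf hij; omega
      rw [mem_Icc]
      omega
    have := card_le_card hsub
    rw [Nat.card_Icc] at this
    omega
  · intro h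
    have hsub : Icc 1 i ⊆ {j ∈ Icc 1 N | m ≤ f j} := fun j hj => by
      rw [mem_Icc] at hj
      exact mem_filter.mpr ⟨mem_Icc.mpr ⟨hj.1, by omega⟩, h.trans (hf hj.2)⟩
    simpa using card_le_card hsub

lemma eq_card_filter_card_filter_of_antitone {f : ℕ → ℕ} (hf : Antitone f) {N i : ℕ}
    (hi : 1 ≤ i) (hiN : i ≤ N) (hfi : f i ≤ N) :
    f i = #{m ∈ Icc 1 N | i ≤ #{j ∈ Icc 1 N | m ≤ f j}} := by
  have hfilter : {m ∈ Icc 1 N | i ≤ #{j ∈ Icc 1 N | m ≤ f j}} = Icc 1 (f i) := by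
    ext m
    rw [mem_filter, mem_Icc, mem_Icc, le_card_filter_iff_of_antitone hf hi hiN]
    omega
  rw [hfilter, Nat.card_Icc, Nat.add_sub_cancel]

/-- The increments of `m ↦ topSum p m` are the parts of `p` in decreasing order, i.e. the `s_m`
of `p^t`, and transposing back recovers the `s_i` of `p`. -/
lemma domLE_antisymm {p q : Multiset ℕ} (hp : ∀ a ∈ p, 0 < a) (hq : ∀ a ∈ q, 0 < a)
    (hsum : p.sum = q.sum) (hpq : domLE p q) (hqp : domLE q p) : p = q := by
  have hinc : ∀ m, #{i ∈ Icc 1 p.sum | m + 1 ≤ sCount p i}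
      = #{i ∈ Icc 1 p.sum | m + 1 ≤ sCount q i} := fun m => by
    have hp_succ := topSum_succ p m
    have hq_succ := topSum_succ q m
    rw [← hsum] at hq_succ
    have := le_antisymm (hpq m) (hqp m)
    have := le_antisymm (hpq (m + 1)) (hqp (m + 1))
    omega
  refine eq_of_sCount_eq hp hq fun i hi => ?_
  by_cases hiN : i ≤ p.sum
  · rw [eq_card_filter_card_filter_of_antitone (antitone_sCount p) hi hiN (sCount_le_sum p hp i),
      eq_card_filter_card_filter_of_antitone (antitone_sCount q) hi hiN
        (hsum ▸ sCount_le_sum q hq i)]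
    congr 1
    refine filter_congr fun m hm => ?_
    obtain ⟨m, rfl⟩ : ∃ m', m = m' + 1 := ⟨m - 1, by rw [mem_Icc] at hm; omega⟩
    rw [hinc]
  · rw [sCount_eq_zero_of_sum_lt p (by omega), sCount_eq_zero_of_sum_lt q (by omega)]

lemma IsSOCollapse.eq_self {p c : Multiset ℕ} (hc : IsSOCollapse p c) (hp : ∀ a ∈ p, 0 < a)
    (ho : IsOrthogonal p) : c = p :=
  domLE_antisymm hc.1.1 hp hc.1.2 hc.2.2.1 (hc.2.2.2 p ⟨hp, rfl⟩ ho fun _ => le_rfl)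

lemma IsSOEvenExpansion.eq_self {p e : Multiset ℕ} (he : IsSOEvenExpansion p e)
    (hp : ∀ a ∈ p, 0 < a) (ho : IsOrthogonal p) (hs : IsSymplectic (transpose p)) : e = p :=
  domLE_antisymm he.1.1 hp he.1.2 (he.2.2.2.2 p ⟨hp, rfl⟩ ho hs fun _ => le_rfl) he.2.2.2.1

end Partitions

theorem even_orthogonal_special_general (n : ℕ) (p : Multiset ℕ)
    (hp : IsPartitionOf p (2 * n))
    (heven : ∀ a ∈ p, a % 2 = 0) :
    nStar p = 0 ∧ pOne p + pOne p = transpose p ∧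
      IsPartitionOf (transpose p) (2 * n) ∧ IsOrthogonal (transpose p) ∧
      IsSymplectic (transpose (transpose p)) ∧
      (∀ e : Multiset ℕ, IsSOEvenExpansion (pOne p + pOne p) e → e = transpose p) ∧
      (∀ c : Multiset ℕ, IsSOCollapse (transpose p) c → c = transpose p) := by
  have hP : pOne p + pOne p = transpose p := pOne_add_self hp.1 heven
  have hpos : ∀ a ∈ transpose p, 0 < a := fun _ => pos_of_mem_transpose
  have horth : IsOrthogonal (transpose p) := hP ▸ isOrthogonal_add_self _
  have hsymp : IsSymplectic (transpose (transpose p)) := by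
    rw [← hP, transpose_add_self]
    exact isSymplectic_map_two_mul _
  refine ⟨nStar_eq_zero_of_forall_even heven, hP, isPartitionOf_transpose hp, horth, hsymp,
    fun e he => ?_, fun c hc => hc.eq_self hpos horth⟩
  rw [hP] at he
  exact he.eq_self hpos horth hsymp

/-- `p` an orthogonal partition of `2n` all of whose parts are even.
Then `n* = 0`, `P = [p₁ p₁]` equals `p^t`, `p^t` is a special orthogonal partition of `2n`
(orthogonal with symplectic transpose), and `P^{SO_{2n}} = (p^t)_{SO_{2n}} = p^t`. -/
theorem even_orthogonal_special (n : ℕ) (p : Multiset ℕ)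
    (hp : IsPartitionOf p (2 * n)) (horth : IsOrthogonal p)
    (heven : ∀ a ∈ p, a % 2 = 0) :
    nStar p = 0 ∧ pOne p + pOne p = transpose p ∧
      IsPartitionOf (transpose p) (2 * n) ∧ IsOrthogonal (transpose p) ∧
      IsSymplectic (transpose (transpose p)) ∧
      (∀ e : Multiset ℕ, IsSOEvenExpansion (pOne p + pOne p) e → e = transpose p) ∧
      (∀ c : Multiset ℕ, IsSOCollapse (transpose p) c → c = transpose p) :=
  even_orthogonal_special_general n p hp heven

end JiangWF
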